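/- Let a > 0, b ∈ ℝ, c > 0 with 1 − b − c ≤ 0, let h : (0,∞) → ℝ be bounded and continuous, m_h = ∫₀^∞ h(t) k_{a,b,c}(t) dt, and let f_h(x) = (1/(x(1+x) k_{a,b,c}(x))) ∫₀ˣ k_{a,b,c}(t)(h(t) − m_h) dt. Then f_h is the unique bounded differentiable solution on (0,∞) of the Kummer Stein equation x(1+x) f′(x) + ((1−b)x − c x(1+x) + a) f(x) = h(x) − m_h, and sup_{x>0} |f_h(x)| ≤ M · sup_{x>0} |h(x) − m_h|, where α = (1 − b − c + √((1−b−c)² + 4 a c))/(2c) and M = max( (1/(α(1+α) k_{a,b,c}(α))) ∫₀^α k_{a,b,c}(t) dt , (1/(α(1+α) k_{a,b,c}(α))) ∫_α^∞ k_{a,b,c}(t) dt ). -/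

import Mathlib

open MeasureTheory Set Filter Real

/-- The Kummer density with parameters `a > 0`, `b ∈ ℝ`, `c > 0`
(normalized by its total mass). -/
noncomputable def kummerDensity (a b c : ℝ) (x : ℝ) : ℝ :=
  (∫ t in Set.Ioi (0 : ℝ), t ^ (a - 1) * (1 + t) ^ (-a - b) * Real.exp (-(c * t)))⁻¹ *
    (x ^ (a - 1) * (1 + x) ^ (-a - b) * Real.exp (-(c * x)))

open scoped Topology

/-!
Put `p(x) = x (1 + x) k(x)` and `q(x) = a + (1 - b) x - c x (1 + x)`. Then `p' = q k`, so the
Stein equation says `(p f)' = k (h - m_h)`: `p f_h` is the primitive of `k (h - m_h)` vanishing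
at `0`, and the difference `g` of two bounded solutions has `(p g)' = 0` and `p g → 0` at `0⁺`,
hence `g = 0`.

For the bound let `F` be the distribution function of `k`. As `h - m_h` has mean zero,
`|p f_h| ≤ B min (F, 1 - F)`. If `1 - b - c ≤ 0` then `q` is decreasing, so `p - q F` (derivative
`-q' F`) increases from `0` at `0⁺` and `q (1 - F) + p` (derivative `q' (1 - F)`) decreases to `0`
at `∞`. Both are therefore nonnegative, which makes `F / p` increasing and `(1 - F) / p`
decreasing; comparing `x` with `α` gives the bound.
-/

section RealLemmas

variable {f f' : ℝ → ℝ} {x₀ x : ℝ}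

lemma monotoneOn_Ioi_of_hasDerivAt_nonneg (hf : ∀ x ∈ Ioi x₀, HasDerivAt f (f' x) x)
    (hf' : ∀ x ∈ Ioi x₀, 0 ≤ f' x) : MonotoneOn f (Ioi x₀) :=
  monotoneOn_of_hasDerivWithinAt_nonneg (convex_Ioi x₀)
    (fun x hx => (hf x hx).continuousAt.continuousWithinAt)
    (by simpa only [interior_Ioi] using fun x hx => (hf x hx).hasDerivWithinAt)
    (by simpa only [interior_Ioi] using hf')

lemma antitoneOn_Ioi_of_hasDerivAt_nonpos (hf : ∀ x ∈ Ioi x₀, HasDerivAt f (f' x) x)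
    (hf' : ∀ x ∈ Ioi x₀, f' x ≤ 0) : AntitoneOn f (Ioi x₀) :=
  antitoneOn_of_hasDerivWithinAt_nonpos (convex_Ioi x₀)
    (fun x hx => (hf x hx).continuousAt.continuousWithinAt)
    (by simpa only [interior_Ioi] using fun x hx => (hf x hx).hasDerivWithinAt)
    (by simpa only [interior_Ioi] using hf')

lemma MonotoneOn.nonneg_of_tendsto_nhdsGT (hf : MonotoneOn f (Ioi x₀))
    (hlim : Tendsto f (𝓝[>] x₀) (𝓝 0)) (hx : x₀ < x) : 0 ≤ f x :=
  le_of_tendsto hlim <| by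
    filter_upwards [Ioo_mem_nhdsGT hx] with y hy
    exact hf hy.1 hx hy.2.le

lemma AntitoneOn.nonneg_of_tendsto_atTop (hf : AntitoneOn f (Ioi x₀))
    (hlim : Tendsto f atTop (𝓝 0)) (hx : x₀ < x) : 0 ≤ f x :=
  le_of_tendsto hlim <| by
    filter_upwards [eventually_ge_atTop x] with y hy
    exact hf hx (hx.trans_le hy) hy

lemma eq_zero_of_hasDerivAt_zero_of_tendsto_nhdsGT (hf : ∀ x ∈ Ioi x₀, HasDerivAt f 0 x)
    (hlim : Tendsto f (𝓝[>] x₀) (𝓝 0)) (hx : x₀ < x) : f x = 0 := by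
  have hf_nonneg :=
    (monotoneOn_Ioi_of_hasDerivAt_nonneg hf fun _ _ => le_rfl).nonneg_of_tendsto_nhdsGT hlim hx
  have hf_nonpos := (monotoneOn_Ioi_of_hasDerivAt_nonneg (f := fun y => -f y)
    (fun y hy => by simpa using (hf y hy).fun_neg) fun _ _ => le_rfl).nonneg_of_tendsto_nhdsGT
    (by simpa using hlim.neg) hx
  linarith

lemma pow_mul_setIntegral_Ioi_le {g : ℝ → ℝ} (n : ℕ) (hg : ∀ t ∈ Ioi 0, 0 ≤ g t)
    (hgi : IntegrableOn g (Ioi 0)) (hmi : IntegrableOn (fun t => t ^ n * g t) (Ioi 0))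
    (hx : 0 < x) : x ^ n * ∫ t in Ioi x, g t ≤ ∫ t in Ioi x, t ^ n * g t := by
  rw [← integral_const_mul]
  refine setIntegral_mono_on ((hgi.mono_set (Ioi_subset_Ioi hx.le)).const_mul _)
    (hmi.mono_set (Ioi_subset_Ioi hx.le)) measurableSet_Ioi fun t ht => ?_
  exact mul_le_mul_of_nonneg_right (pow_le_pow_left₀ hx.le (le_of_lt ht) n)
    (hg t (hx.trans ht))

end RealLemmas

noncomputable def kummerWeight (s r c x : ℝ) : ℝ := x ^ s * (1 + x) ^ r * exp (-(c * x))

section KummerWeight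

variable {s r c x : ℝ}

lemma kummerWeight_pos (hx : 0 < x) : 0 < kummerWeight s r c x := by
  unfold kummerWeight; positivity

lemma continuousAt_kummerWeight (hx : 0 < x) : ContinuousAt (kummerWeight s r c) x := by
  unfold kummerWeight
  have h1 : 1 + x ≠ 0 := by linarith
  exact ((continuousAt_id.rpow_const (Or.inl hx.ne')).mul
    ((continuousAt_const.add continuousAt_id).rpow_const (Or.inl h1))).mul (by fun_prop)

lemma continuousOn_kummerWeight : ContinuousOn (kummerWeight s r c) (Ioi 0) :=
  fun _ hx => (continuousAt_kummerWeight hx).continuousWithinAt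

lemma hasDerivAt_kummerWeight (hx : 0 < x) :
    HasDerivAt (kummerWeight s r c) (kummerWeight s r c x * (s / x + r / (1 + x) - c)) x := by
  have h1 : 0 < 1 + x := by linarith
  have hd := ((hasDerivAt_rpow_const (p := s) (Or.inl hx.ne')).fun_mul
    (((hasDerivAt_id' x).const_add 1).rpow_const (p := r) (Or.inl h1.ne'))).fun_mul
    (((hasDerivAt_id' x).const_mul c).fun_neg.exp)
  refine HasDerivAt.congr_deriv (f := kummerWeight s r c) hd ?_
  rw [kummerWeight, rpow_sub_one hx.ne', rpow_sub_one h1.ne']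
  field_simp
  ring

lemma mul_kummerWeight (hx : 0 < x) :
    x * (1 + x) * kummerWeight s r c x = kummerWeight (s + 1) (r + 1) c x := by
  simp only [kummerWeight, rpow_add_one hx.ne', rpow_add_one (by linarith : 1 + x ≠ 0)]
  ring

lemma pow_mul_kummerWeight (n : ℕ) (hx : 0 < x) :
    x ^ n * kummerWeight s r c x = kummerWeight (s + n) r c x := by
  simp only [kummerWeight, rpow_add hx, rpow_natCast]
  ring

lemma kummerWeight_le (hx : 0 < x) :
    kummerWeight s r c x ≤
      2 ^ max r 0 * (x ^ s * exp (-(c * x)) + x ^ (s + max r 0) * exp (-(c * x))) := by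
  set t := max r 0
  have hone_add : (1 + x) ^ t ≤ 2 ^ t * (1 + x ^ t) := by
    rcases le_total x 1 with hx1 | hx1
    · calc (1 + x) ^ t ≤ 2 ^ t := rpow_le_rpow (by linarith) (by linarith) (le_max_right _ _)
        _ ≤ 2 ^ t * (1 + x ^ t) := le_mul_of_one_le_right (by positivity)
            (le_add_of_nonneg_right (by positivity))
    · calc (1 + x) ^ t ≤ (2 * x) ^ t := rpow_le_rpow (by linarith) (by linarith) (le_max_right _ _)
        _ = 2 ^ t * x ^ t := mul_rpow (by norm_num) hx.le
        _ ≤ 2 ^ t * (1 + x ^ t) := by gcongr; linarith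
  have hr : (1 + x) ^ r ≤ (1 + x) ^ t :=
    rpow_le_rpow_of_exponent_le (by linarith) (le_max_left _ _)
  calc kummerWeight s r c x ≤ x ^ s * (2 ^ t * (1 + x ^ t)) * exp (-(c * x)) := by
        unfold kummerWeight; gcongr; exact hr.trans hone_add
    _ = _ := by rw [rpow_add hx]; ring

lemma integrableOn_kummerWeight (hs : -1 < s) (hc : 0 < c) :
    IntegrableOn (kummerWeight s r c) (Ioi 0) := by
  have hexp (u : ℝ) (hu : -1 < u) : IntegrableOn (fun x => x ^ u * exp (-(c * x))) (Ioi 0) := by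
    simpa [rpow_one, neg_mul] using integrableOn_rpow_mul_exp_neg_mul_rpow hu one_pos hc
  have hexp' := hexp (s + max r 0) (by linarith [le_max_right r 0])
  refine Integrable.mono' (((hexp s hs).add hexp').const_mul (2 ^ max r 0))
    (continuousOn_kummerWeight.aestronglyMeasurable measurableSet_Ioi) ?_
  filter_upwards [self_mem_ae_restrict measurableSet_Ioi] with x hx
  rw [norm_of_nonneg (kummerWeight_pos hx).le]
  exact kummerWeight_le hx

lemma tendsto_kummerWeight_atTop (hc : 0 < c) : Tendsto (kummerWeight s r c) atTop (𝓝 0) := by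
  have hexp (u : ℝ) : Tendsto (fun x => x ^ u * exp (-(c * x))) atTop (𝓝 0) := by
    simpa [neg_mul] using tendsto_rpow_mul_exp_neg_mul_atTop_nhds_zero u c hc
  have hbound := ((hexp s).add (hexp (s + max r 0))).const_mul (2 ^ max r 0)
  rw [add_zero, mul_zero] at hbound
  refine tendsto_of_tendsto_of_tendsto_of_le_of_le' tendsto_const_nhds hbound ?_ ?_
  · filter_upwards [eventually_gt_atTop 0] with x hx using (kummerWeight_pos hx).le
  · filter_upwards [eventually_gt_atTop 0] with x hx using kummerWeight_le hx

lemma tendsto_kummerWeight_nhdsGT_zero (hs : 0 < s) :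
    Tendsto (kummerWeight s r c) (𝓝[>] 0) (𝓝 0) := by
  have hcont : ContinuousAt (kummerWeight s r c) 0 := by
    unfold kummerWeight
    exact ((continuousAt_id.rpow_const (Or.inr hs.le)).mul
      ((continuousAt_const.add continuousAt_id).rpow_const (Or.inl (by norm_num)))).mul
      (by fun_prop)
  have h0 : kummerWeight s r c 0 = 0 := by simp [kummerWeight, zero_rpow hs.ne']
  simpa [h0] using hcont.tendsto.mono_left nhdsWithin_le_nhds

end KummerWeight

noncomputable def kummerConst (a b c : ℝ) : ℝ := ∫ t in Ioi 0, kummerWeight (a - 1) (-a - b) c t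

noncomputable def kummerQ (a b c x : ℝ) : ℝ := (1 - b) * x - c * x * (1 + x) + a

noncomputable def kummerP (a b c x : ℝ) : ℝ := x * (1 + x) * kummerDensity a b c x

noncomputable def kummerCDF (a b c x : ℝ) : ℝ := ∫ t in (0 : ℝ)..x, kummerDensity a b c t

noncomputable def kummerTail (a b c x : ℝ) : ℝ := ∫ t in Ioi x, kummerDensity a b c t

section KummerDensity

variable {a b c x : ℝ}

lemma kummerDensity_eq :
    kummerDensity a b c x = (kummerConst a b c)⁻¹ * kummerWeight (a - 1) (-a - b) c x :=
  rfl

lemma kummerConst_pos (ha : 0 < a) (hc : 0 < c) : 0 < kummerConst a b c := by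
  rw [kummerConst, setIntegral_pos_iff_support_of_nonneg_ae
    (ae_restrict_of_forall_mem measurableSet_Ioi fun x hx => (kummerWeight_pos hx).le)
    (integrableOn_kummerWeight (by linarith) hc)]
  have hsupp : Ioi 0 ⊆ Function.support fun x => kummerWeight (a - 1) (-a - b) c x :=
    fun x hx => (kummerWeight_pos hx).ne'
  simp [inter_eq_right.mpr hsupp]

lemma kummerDensity_pos (ha : 0 < a) (hc : 0 < c) (hx : 0 < x) : 0 < kummerDensity a b c x :=
  mul_pos (inv_pos.mpr (kummerConst_pos ha hc)) (kummerWeight_pos hx)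

lemma continuousOn_kummerDensity : ContinuousOn (kummerDensity a b c) (Ioi 0) :=
  continuousOn_const.mul continuousOn_kummerWeight

lemma integrableOn_kummerDensity (ha : 0 < a) (hc : 0 < c) :
    IntegrableOn (kummerDensity a b c) (Ioi 0) :=
  (integrableOn_kummerWeight (by linarith) hc).const_mul _

lemma integral_kummerDensity (ha : 0 < a) (hc : 0 < c) :
    ∫ t in Ioi 0, kummerDensity a b c t = 1 := by
  simp only [kummerDensity_eq, integral_const_mul]
  exact inv_mul_cancel₀ (kummerConst_pos ha hc).ne'

lemma kummerP_eq (hx : 0 < x) :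
    kummerP a b c x = (kummerConst a b c)⁻¹ * kummerWeight a (1 - a - b) c x := by
  rw [kummerP, kummerDensity_eq, mul_left_comm, mul_kummerWeight hx]
  congr 2 <;> ring

lemma kummerP_pos (ha : 0 < a) (hc : 0 < c) (hx : 0 < x) : 0 < kummerP a b c x :=
  mul_pos (mul_pos hx (by linarith)) (kummerDensity_pos ha hc hx)

lemma hasDerivAt_kummerP (hx : 0 < x) :
    HasDerivAt (kummerP a b c) (kummerQ a b c x * kummerDensity a b c x) x := by
  have hP : (fun y => (kummerConst a b c)⁻¹ * kummerWeight a (1 - a - b) c y) =ᶠ[𝓝 x]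
      kummerP a b c := by
    filter_upwards [Ioi_mem_nhds hx] with y hy using (kummerP_eq hy).symm
  refine ((hasDerivAt_kummerWeight hx).const_mul _).congr_of_eventuallyEq hP.symm
    |>.congr_deriv ?_
  rw [← mul_assoc, ← kummerP_eq hx, kummerP, kummerQ]
  field_simp
  ring

lemma tendsto_kummerP_nhdsGT_zero (ha : 0 < a) : Tendsto (kummerP a b c) (𝓝[>] 0) (𝓝 0) := by
  have hlim := (tendsto_kummerWeight_nhdsGT_zero (r := 1 - a - b) (c := c) ha).const_mul
    (kummerConst a b c)⁻¹
  rw [mul_zero] at hlim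
  exact hlim.congr' <| eventually_nhdsWithin_of_forall fun y hy => (kummerP_eq hy).symm

lemma tendsto_kummerP_atTop (hc : 0 < c) : Tendsto (kummerP a b c) atTop (𝓝 0) := by
  have hlim := (tendsto_kummerWeight_atTop (s := a) (r := 1 - a - b) hc).const_mul
    (kummerConst a b c)⁻¹
  rw [mul_zero] at hlim
  exact hlim.congr' <| by
    filter_upwards [eventually_gt_atTop 0] with y hy using (kummerP_eq hy).symm

lemma hasDerivAt_kummerQ : HasDerivAt (kummerQ a b c) (1 - b - c * (1 + 2 * x)) x := by
  have hd := (((hasDerivAt_id' x).const_mul (1 - b)).sub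
    (((hasDerivAt_id' x).const_mul c).mul ((hasDerivAt_id' x).const_add 1))).add_const a
  exact hd.congr_deriv (by ring)

end KummerDensity

section KummerCDF

variable {a b c x : ℝ}

lemma kummerCDF_add_kummerTail (ha : 0 < a) (hc : 0 < c) (hx : 0 ≤ x) :
    kummerCDF a b c x + kummerTail a b c x = 1 := by
  have hint := integrableOn_kummerDensity (b := b) ha hc
  rw [kummerCDF, kummerTail, intervalIntegral.integral_interval_add_Ioi hint
    (hint.mono_set (Ioi_subset_Ioi hx)), integral_kummerDensity ha hc]

lemma intervalIntegrable_kummerDensity (ha : 0 < a) (hc : 0 < c) (hx : 0 ≤ x) :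
    IntervalIntegrable (kummerDensity a b c) volume 0 x :=
  (intervalIntegrable_iff_integrableOn_Ioc_of_le hx).mpr
    ((integrableOn_kummerDensity ha hc).mono_set Ioc_subset_Ioi_self)

lemma kummerCDF_nonneg (ha : 0 < a) (hc : 0 < c) (hx : 0 ≤ x) : 0 ≤ kummerCDF a b c x := by
  rw [kummerCDF, intervalIntegral.integral_of_le hx]
  exact setIntegral_nonneg measurableSet_Ioc fun _ ht => (kummerDensity_pos ha hc ht.1).le

lemma kummerTail_nonneg (ha : 0 < a) (hc : 0 < c) (hx : 0 ≤ x) : 0 ≤ kummerTail a b c x :=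
  setIntegral_nonneg measurableSet_Ioi fun _ ht => (kummerDensity_pos ha hc (hx.trans_lt ht)).le

lemma hasDerivAt_kummerCDF (ha : 0 < a) (hc : 0 < c) (hx : 0 < x) :
    HasDerivAt (kummerCDF a b c) (kummerDensity a b c x) x :=
  intervalIntegral.integral_hasDerivAt_right (intervalIntegrable_kummerDensity ha hc hx.le)
    (continuousOn_kummerDensity.stronglyMeasurableAtFilter isOpen_Ioi x hx)
    (continuousOn_kummerDensity.continuousAt (Ioi_mem_nhds hx))

lemma hasDerivAt_kummerTail (ha : 0 < a) (hc : 0 < c) (hx : 0 < x) :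
    HasDerivAt (kummerTail a b c) (-kummerDensity a b c x) x := by
  have hT : (fun y => 1 - kummerCDF a b c y) =ᶠ[𝓝 x] kummerTail a b c := by
    filter_upwards [Ioi_mem_nhds hx] with y hy
    linarith [kummerCDF_add_kummerTail (b := b) ha hc (le_of_lt hy)]
  simpa using ((hasDerivAt_kummerCDF ha hc hx).const_sub 1).congr_of_eventuallyEq hT.symm

lemma tendsto_kummerCDF_nhdsGT_zero (ha : 0 < a) (hc : 0 < c) :
    Tendsto (kummerCDF a b c) (𝓝[>] 0) (𝓝 0) := by
  have hcont := intervalIntegral.continuousWithinAt_primitive (a := 0) (b₁ := 0) (b₂ := 1)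
    (b₀ := 0) (f := kummerDensity a b c) (μ := volume) (by simp)
    (by simpa using intervalIntegrable_kummerDensity ha hc zero_le_one)
  have hlim := (hcont.mono_of_mem_nhdsWithin (Icc_mem_nhdsGT one_pos)).tendsto
  rwa [intervalIntegral.integral_same] at hlim

/-- Squeezed by `K ∫_{t > x} t² k(t)`, as `|kummerQ x| ≤ K x²` for `x ≥ 1`. -/
lemma tendsto_kummerQ_mul_kummerTail_atTop (ha : 0 < a) (hc : 0 < c) :
    Tendsto (fun x => kummerQ a b c x * kummerTail a b c x) atTop (𝓝 0) := by
  have hmoment : IntegrableOn (fun t => t ^ 2 * kummerDensity a b c t) (Ioi 0) := by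
    refine IntegrableOn.congr_fun ((integrableOn_kummerWeight (s := a - 1 + 2) (r := -a - b)
      (by linarith) hc).const_mul (kummerConst a b c)⁻¹) (fun t ht => ?_) measurableSet_Ioi
    rw [kummerDensity_eq, mul_left_comm, pow_mul_kummerWeight 2 ht, Nat.cast_ofNat]
  set K := a + |1 - b| + 2 * c
  have htail := (tendsto_integral_Ioi_zero (f := fun t => t ^ 2 * kummerDensity a b c t)
    (μ := volume) tendsto_id).const_mul K
  rw [mul_zero] at htail
  refine squeeze_zero_norm' ?_ htail
  filter_upwards [eventually_ge_atTop 1] with x hx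
  have hx0 : 0 < x := by linarith
  have hq : |kummerQ a b c x| ≤ K * x ^ 2 := by
    have hx2 : x ≤ x ^ 2 := by nlinarith
    have hlin : |(1 - b) * x| ≤ |1 - b| * x ^ 2 := by
      rw [abs_mul, abs_of_pos hx0]; exact mul_le_mul_of_nonneg_left hx2 (abs_nonneg _)
    rw [abs_le] at hlin ⊢
    rw [kummerQ]
    constructor <;> nlinarith
  rw [norm_mul, norm_of_nonneg (kummerTail_nonneg ha hc hx0.le), Real.norm_eq_abs]
  calc |kummerQ a b c x| * kummerTail a b c x ≤ K * x ^ 2 * kummerTail a b c x :=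
        mul_le_mul_of_nonneg_right hq (kummerTail_nonneg ha hc hx0.le)
    _ ≤ K * ∫ t in Ioi x, t ^ 2 * kummerDensity a b c t := by
        rw [mul_assoc]
        exact mul_le_mul_of_nonneg_left (pow_mul_setIntegral_Ioi_le 2
          (fun t ht => (kummerDensity_pos ha hc ht).le) (integrableOn_kummerDensity ha hc)
          hmoment hx0) (by positivity)

end KummerCDF

section Monotonicity

variable {a b c x : ℝ}

lemma deriv_kummerQ_nonpos (hc : 0 < c) (hbc : 1 - b - c ≤ 0) (hx : 0 < x) :
    1 - b - c * (1 + 2 * x) ≤ 0 := by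
  nlinarith

lemma kummerQ_mul_kummerCDF_le_kummerP (ha : 0 < a) (hc : 0 < c) (hbc : 1 - b - c ≤ 0)
    (hx : 0 < x) : kummerQ a b c x * kummerCDF a b c x ≤ kummerP a b c x := by
  have hmono : MonotoneOn (fun y => kummerP a b c y - kummerQ a b c y * kummerCDF a b c y)
      (Ioi 0) := by
    refine monotoneOn_Ioi_of_hasDerivAt_nonneg (fun y hy =>
      (hasDerivAt_kummerP hy).sub (hasDerivAt_kummerQ.mul (hasDerivAt_kummerCDF ha hc hy)))
      fun y hy => ?_
    nlinarith [deriv_kummerQ_nonpos hc hbc hy, kummerCDF_nonneg (b := b) ha hc (le_of_lt hy)]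
  have hlim : Tendsto (fun y => kummerP a b c y - kummerQ a b c y * kummerCDF a b c y)
      (𝓝[>] 0) (𝓝 0) := by
    simpa using (tendsto_kummerP_nhdsGT_zero ha).sub
      ((hasDerivAt_kummerQ (x := 0)).continuousAt.continuousWithinAt.tendsto.mul
        (tendsto_kummerCDF_nhdsGT_zero ha hc))
  linarith [hmono.nonneg_of_tendsto_nhdsGT hlim hx]

lemma neg_kummerP_le_kummerQ_mul_kummerTail (ha : 0 < a) (hc : 0 < c) (hbc : 1 - b - c ≤ 0)
    (hx : 0 < x) : -kummerP a b c x ≤ kummerQ a b c x * kummerTail a b c x := by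
  have hanti : AntitoneOn (fun y => kummerQ a b c y * kummerTail a b c y + kummerP a b c y)
      (Ioi 0) := by
    refine antitoneOn_Ioi_of_hasDerivAt_nonpos (fun y hy =>
      (hasDerivAt_kummerQ.mul (hasDerivAt_kummerTail ha hc hy)).add (hasDerivAt_kummerP hy))
      fun y hy => ?_
    nlinarith [deriv_kummerQ_nonpos hc hbc hy, kummerTail_nonneg (b := b) ha hc (le_of_lt hy)]
  have hlim : Tendsto (fun y => kummerQ a b c y * kummerTail a b c y + kummerP a b c y)
      atTop (𝓝 0) := by
    simpa using (tendsto_kummerQ_mul_kummerTail_atTop ha hc).add (tendsto_kummerP_atTop hc)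
  linarith [hanti.nonneg_of_tendsto_atTop hlim hx]

lemma monotoneOn_kummerCDF_div_kummerP (ha : 0 < a) (hc : 0 < c) (hbc : 1 - b - c ≤ 0) :
    MonotoneOn (fun x => kummerCDF a b c x / kummerP a b c x) (Ioi 0) := by
  refine monotoneOn_Ioi_of_hasDerivAt_nonneg (fun x hx => (hasDerivAt_kummerCDF ha hc hx).div
    (hasDerivAt_kummerP hx) (kummerP_pos ha hc hx).ne') fun x hx => div_nonneg ?_ (sq_nonneg _)
  have := mul_le_mul_of_nonneg_left (kummerQ_mul_kummerCDF_le_kummerP ha hc hbc hx)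
    (kummerDensity_pos (b := b) ha hc hx).le
  linarith

lemma antitoneOn_kummerTail_div_kummerP (ha : 0 < a) (hc : 0 < c) (hbc : 1 - b - c ≤ 0) :
    AntitoneOn (fun x => kummerTail a b c x / kummerP a b c x) (Ioi 0) := by
  refine antitoneOn_Ioi_of_hasDerivAt_nonpos (fun x hx => (hasDerivAt_kummerTail ha hc hx).div
    (hasDerivAt_kummerP hx) (kummerP_pos ha hc hx).ne') fun x hx =>
    div_nonpos_of_nonpos_of_nonneg ?_ (sq_nonneg _)
  have := mul_le_mul_of_nonneg_left (neg_kummerP_le_kummerQ_mul_kummerTail ha hc hbc hx)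
    (kummerDensity_pos (b := b) ha hc hx).le
  linarith

end Monotonicity

noncomputable def kummerSteinOp (a b c : ℝ) (f : ℝ → ℝ) (x : ℝ) : ℝ :=
  x * (1 + x) * deriv f x + kummerQ a b c x * f x

noncomputable def kummerSteinSolution (a b c : ℝ) (g : ℝ → ℝ) (x : ℝ) : ℝ :=
  (kummerP a b c x)⁻¹ * ∫ t in (0 : ℝ)..x, kummerDensity a b c t * g t

section KummerStein

variable {a b c x B : ℝ} {g : ℝ → ℝ}

lemma hasDerivAt_kummerP_mul {f : ℝ → ℝ} (hx : 0 < x) (hf : DifferentiableAt ℝ f x) :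
    HasDerivAt (fun y => kummerP a b c y * f y)
      (kummerDensity a b c x * kummerSteinOp a b c f x) x :=
  ((hasDerivAt_kummerP hx).mul hf.hasDerivAt).congr_deriv (by rw [kummerSteinOp, kummerP]; ring)

lemma norm_kummerDensity_mul_le (ha : 0 < a) (hc : 0 < c) (hB : ∀ x ∈ Ioi 0, |g x| ≤ B)
    (hx : 0 < x) : ‖kummerDensity a b c x * g x‖ ≤ B * kummerDensity a b c x := by
  rw [norm_mul, norm_of_nonneg (kummerDensity_pos ha hc hx).le, mul_comm]
  exact mul_le_mul_of_nonneg_right (hB x hx) (kummerDensity_pos ha hc hx).le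

lemma integrableOn_kummerDensity_mul (ha : 0 < a) (hc : 0 < c) (hg : ContinuousOn g (Ioi 0))
    (hB : ∀ x ∈ Ioi 0, |g x| ≤ B) :
    IntegrableOn (fun t => kummerDensity a b c t * g t) (Ioi 0) :=
  Integrable.mono' ((integrableOn_kummerDensity ha hc).const_mul B)
    ((continuousOn_kummerDensity.mul hg).aestronglyMeasurable measurableSet_Ioi)
    (ae_restrict_of_forall_mem measurableSet_Ioi fun _ ht => norm_kummerDensity_mul_le ha hc hB ht)

lemma integral_kummerDensity_mul_sub_mean (ha : 0 < a) (hc : 0 < c)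
    (hint : IntegrableOn (fun t => kummerDensity a b c t * g t) (Ioi 0)) :
    ∫ t in Ioi 0, kummerDensity a b c t * (g t - ∫ s in Ioi 0, g s * kummerDensity a b c s)
      = 0 := by
  simp_rw [mul_sub, mul_comm (g _)]
  rw [integral_sub hint ((integrableOn_kummerDensity ha hc).mul_const _), integral_mul_const,
    integral_kummerDensity ha hc, one_mul, sub_self]

lemma abs_integral_kummerDensity_mul_le_kummerCDF (ha : 0 < a) (hc : 0 < c)
    (hB : ∀ x ∈ Ioi 0, |g x| ≤ B) (hx : 0 ≤ x) :
    |∫ t in (0 : ℝ)..x, kummerDensity a b c t * g t| ≤ B * kummerCDF a b c x := by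
  rw [kummerCDF, ← intervalIntegral.integral_const_mul]
  exact intervalIntegral.norm_integral_le_of_norm_le hx
    (ae_of_all _ fun t ht => norm_kummerDensity_mul_le ha hc hB ht.1)
    ((intervalIntegrable_kummerDensity ha hc hx).const_mul B)

lemma abs_integral_kummerDensity_mul_le_kummerTail (ha : 0 < a) (hc : 0 < c)
    (hint : IntegrableOn (fun t => kummerDensity a b c t * g t) (Ioi 0))
    (hB : ∀ x ∈ Ioi 0, |g x| ≤ B) (hmean : ∫ t in Ioi 0, kummerDensity a b c t * g t = 0)
    (hx : 0 ≤ x) :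
    |∫ t in (0 : ℝ)..x, kummerDensity a b c t * g t| ≤ B * kummerTail a b c x := by
  have hsplit := intervalIntegral.integral_interval_add_Ioi hint (hint.mono_set (Ioi_subset_Ioi hx))
  rw [hmean] at hsplit
  rw [eq_neg_of_add_eq_zero_left hsplit, abs_neg, kummerTail, ← integral_const_mul]
  exact norm_integral_le_of_norm_le
    (((integrableOn_kummerDensity ha hc).mono_set (Ioi_subset_Ioi hx)).const_mul B)
    (ae_restrict_of_forall_mem measurableSet_Ioi fun t ht =>
      norm_kummerDensity_mul_le ha hc hB (hx.trans_lt ht))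

lemma kummerSteinOp_kummerSteinSolution (ha : 0 < a) (hc : 0 < c) (hg : ContinuousOn g (Ioi 0))
    (hint : IntegrableOn (fun t => kummerDensity a b c t * g t) (Ioi 0)) (hx : 0 < x) :
    DifferentiableAt ℝ (kummerSteinSolution a b c g) x ∧
      kummerSteinOp a b c (kummerSteinSolution a b c g) x = g x := by
  set Φ := fun y => ∫ t in (0 : ℝ)..y, kummerDensity a b c t * g t
  have hΦ : HasDerivAt Φ (kummerDensity a b c x * g x) x :=
    intervalIntegral.integral_hasDerivAt_right
      ((intervalIntegrable_iff_integrableOn_Ioc_of_le hx.le).mpr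
        (hint.mono_set Ioc_subset_Ioi_self))
      ((continuousOn_kummerDensity.mul hg).stronglyMeasurableAtFilter isOpen_Ioi x hx)
      ((continuousOn_kummerDensity.mul hg).continuousAt (Ioi_mem_nhds hx))
  have hdiff : DifferentiableAt ℝ (kummerSteinSolution a b c g) x :=
    (((hasDerivAt_kummerP hx).inv (kummerP_pos ha hc hx).ne').mul hΦ).differentiableAt
  refine ⟨hdiff, ?_⟩
  have hPΦ : (fun y => kummerP a b c y * kummerSteinSolution a b c g y) =ᶠ[𝓝 x] Φ := by
    filter_upwards [Ioi_mem_nhds hx] with y hy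
    exact mul_inv_cancel_left₀ (kummerP_pos ha hc hy).ne' _
  have hderiv := (hasDerivAt_kummerP_mul hx hdiff).unique (hΦ.congr_of_eventuallyEq hPΦ)
  exact mul_left_cancel₀ (kummerDensity_pos ha hc hx).ne' hderiv

lemma eq_of_kummerSteinOp_eq (ha : 0 < a) (hc : 0 < c) {f₁ f₂ : ℝ → ℝ}
    (hf₁ : ∀ x ∈ Ioi 0, DifferentiableAt ℝ f₁ x) (hf₂ : ∀ x ∈ Ioi 0, DifferentiableAt ℝ f₂ x)
    (hb₁ : ∃ C, ∀ x ∈ Ioi 0, |f₁ x| ≤ C) (hb₂ : ∃ C, ∀ x ∈ Ioi 0, |f₂ x| ≤ C)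
    (heq : ∀ x ∈ Ioi 0, kummerSteinOp a b c f₁ x = kummerSteinOp a b c f₂ x) (hx : 0 < x) :
    f₁ x = f₂ x := by
  obtain ⟨C₁, hC₁⟩ := hb₁
  obtain ⟨C₂, hC₂⟩ := hb₂
  have hderiv (y : ℝ) (hy : y ∈ Ioi 0) :
      HasDerivAt (fun y => kummerP a b c y * f₁ y - kummerP a b c y * f₂ y) 0 y := by
    have hsub := (hasDerivAt_kummerP_mul (a := a) (b := b) (c := c) hy (hf₁ y hy)).fun_sub
      (hasDerivAt_kummerP_mul (a := a) (b := b) (c := c) hy (hf₂ y hy))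
    rwa [heq y hy, sub_self] at hsub
  have hlim : Tendsto (fun y => kummerP a b c y * f₁ y - kummerP a b c y * f₂ y) (𝓝[>] 0)
      (𝓝 0) := by
    have hP := (tendsto_kummerP_nhdsGT_zero (b := b) (c := c) ha).const_mul (C₁ + C₂)
    rw [mul_zero] at hP
    refine squeeze_zero_norm' ?_ hP
    filter_upwards [self_mem_nhdsWithin] with y hy
    rw [← mul_sub, norm_mul, norm_of_nonneg (kummerP_pos ha hc hy).le, mul_comm]
    exact mul_le_mul_of_nonneg_right ((norm_sub_le _ _).trans (add_le_add (hC₁ y hy) (hC₂ y hy)))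
      (kummerP_pos ha hc hy).le
  have hzero := eq_zero_of_hasDerivAt_zero_of_tendsto_nhdsGT hderiv hlim hx
  rw [← mul_sub, mul_eq_zero] at hzero
  exact sub_eq_zero.mp (hzero.resolve_left (kummerP_pos ha hc hx).ne')

lemma abs_kummerSteinSolution_le (ha : 0 < a) (hc : 0 < c) (hbc : 1 - b - c ≤ 0) {α : ℝ}
    (hint : IntegrableOn (fun t => kummerDensity a b c t * g t) (Ioi 0))
    (hB : ∀ x ∈ Ioi 0, |g x| ≤ B) (hmean : ∫ t in Ioi 0, kummerDensity a b c t * g t = 0)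
    (hα : 0 < α) (hx : 0 < x) :
    |kummerSteinSolution a b c g x| ≤
      max ((kummerP a b c α)⁻¹ * kummerCDF a b c α) ((kummerP a b c α)⁻¹ * kummerTail a b c α)
        * B := by
  have hB0 : 0 ≤ B := (abs_nonneg _).trans (hB 1 (mem_Ioi.mpr one_pos))
  have hP := inv_pos.mpr (kummerP_pos (b := b) ha hc hx)
  rw [kummerSteinSolution, abs_mul, abs_inv, abs_of_pos (kummerP_pos ha hc hx)]
  rcases le_total x α with hxα | hαx
  · calc (kummerP a b c x)⁻¹ * |∫ t in (0 : ℝ)..x, kummerDensity a b c t * g t|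
        ≤ (kummerP a b c x)⁻¹ * (B * kummerCDF a b c x) := by
          exact mul_le_mul_of_nonneg_left
            (abs_integral_kummerDensity_mul_le_kummerCDF ha hc hB hx.le) hP.le
      _ = kummerCDF a b c x / kummerP a b c x * B := by ring
      _ ≤ kummerCDF a b c α / kummerP a b c α * B := by
          gcongr ?_ * B; exact monotoneOn_kummerCDF_div_kummerP ha hc hbc hx hα hxα
      _ ≤ _ := by rw [div_eq_inv_mul]; gcongr; exact le_max_left _ _
  · calc (kummerP a b c x)⁻¹ * |∫ t in (0 : ℝ)..x, kummerDensity a b c t * g t|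
        ≤ (kummerP a b c x)⁻¹ * (B * kummerTail a b c x) := by
          exact mul_le_mul_of_nonneg_left
            (abs_integral_kummerDensity_mul_le_kummerTail ha hc hint hB hmean hx.le) hP.le
      _ = kummerTail a b c x / kummerP a b c x * B := by ring
      _ ≤ kummerTail a b c α / kummerP a b c α * B := by
          gcongr ?_ * B; exact antitoneOn_kummerTail_div_kummerP ha hc hbc hα hx hαx
      _ ≤ _ := by rw [div_eq_inv_mul]; gcongr; exact le_max_right _ _

end KummerStein

/-- for `1 − b − c ≤ 0`, the function `f_h` is the unique bounded
differentiable solution of the Kummer Stein equation on `(0,∞)` and satisfies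
`sup_{x>0} |f_h(x)| ≤ M · sup_{x>0} |h(x) − m_h|`, where
`α = (1 − b − c + √((1−b−c)² + 4ac))/(2c)` and
`M = max( (α(1+α)k(α))⁻¹ ∫₀^α k , (α(1+α)k(α))⁻¹ ∫_α^∞ k )`.
(The supremum bound is expressed via arbitrary upper bounds `B` of `|h − m_h|`.) -/
theorem kummer_stein_solution_unique_bounded_and_bound (a b c : ℝ)
    (ha : 0 < a) (hc : 0 < c) (hbc : 1 - b - c ≤ 0)
    (h : ℝ → ℝ) (hh_cont : ContinuousOn h (Set.Ioi 0))
    (hh_bdd : ∃ C, ∀ x ∈ Set.Ioi (0 : ℝ), |h x| ≤ C) :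
    let m := ∫ t in Set.Ioi (0 : ℝ), h t * kummerDensity a b c t
    let fh : ℝ → ℝ := fun x =>
      (x * (1 + x) * kummerDensity a b c x)⁻¹ *
        ∫ t in (0 : ℝ)..x, kummerDensity a b c t * (h t - m)
    let α := (1 - b - c + Real.sqrt ((1 - b - c) ^ 2 + 4 * a * c)) / (2 * c)
    let M := max
      ((α * (1 + α) * kummerDensity a b c α)⁻¹ * ∫ t in (0 : ℝ)..α, kummerDensity a b c t)
      ((α * (1 + α) * kummerDensity a b c α)⁻¹ * ∫ t in Set.Ioi α, kummerDensity a b c t)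
    -- `f_h` is a bounded differentiable solution of the Kummer Stein equation
    ((∀ x ∈ Set.Ioi (0 : ℝ), DifferentiableAt ℝ fh x ∧
        x * (1 + x) * deriv fh x + ((1 - b) * x - c * x * (1 + x) + a) * fh x = h x - m) ∧
      (∃ C, ∀ x ∈ Set.Ioi (0 : ℝ), |fh x| ≤ C)) ∧
    -- uniqueness among bounded differentiable solutions
    (∀ f : ℝ → ℝ, (∀ x ∈ Set.Ioi (0 : ℝ), DifferentiableAt ℝ f x) →
      (∃ C, ∀ x ∈ Set.Ioi (0 : ℝ), |f x| ≤ C) →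
      (∀ x ∈ Set.Ioi (0 : ℝ),
        x * (1 + x) * deriv f x + ((1 - b) * x - c * x * (1 + x) + a) * f x = h x - m) →
      ∀ x ∈ Set.Ioi (0 : ℝ), f x = fh x) ∧
    -- the uniform bound
    (∀ B : ℝ, (∀ x ∈ Set.Ioi (0 : ℝ), |h x - m| ≤ B) →
      ∀ x ∈ Set.Ioi (0 : ℝ), |fh x| ≤ M * B) := by
  intro m fh α M
  obtain ⟨C, hC⟩ := hh_bdd
  have hg : ContinuousOn (fun t => h t - m) (Ioi 0) := hh_cont.sub continuousOn_const
  have hgC : ∀ x ∈ Ioi 0, |h x - m| ≤ C + |m| := fun x hx =>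
    (abs_sub _ _).trans (add_le_add_left (hC x hx) _)
  have hint := integrableOn_kummerDensity_mul (b := b) ha hc hg hgC
  have hmean : ∫ t in Ioi 0, kummerDensity a b c t * (h t - m) = 0 :=
    integral_kummerDensity_mul_sub_mean ha hc (integrableOn_kummerDensity_mul ha hc hh_cont hC)
  have hα : 0 < α := by
    have hsqrt : -(1 - b - c) < √((1 - b - c) ^ 2 + 4 * a * c) :=
      (lt_sqrt (by linarith)).mpr (by nlinarith [mul_pos ha hc])
    exact div_pos (by linarith) (by positivity)
  have hsol := fun x (hx : 0 < x) => kummerSteinOp_kummerSteinSolution ha hc hg hint hx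
  have hbound : ∀ B : ℝ, (∀ x ∈ Ioi 0, |h x - m| ≤ B) → ∀ x ∈ Ioi 0, |fh x| ≤ M * B :=
    fun B hB x hx => abs_kummerSteinSolution_le ha hc hbc
      (integrableOn_kummerDensity_mul ha hc hg hB) hB hmean hα hx
  have hbdd : ∃ C, ∀ x ∈ Ioi 0, |fh x| ≤ C := ⟨_, hbound _ hgC⟩
  refine ⟨⟨hsol, hbdd⟩, fun f hf hfb hfeq x hx => ?_, hbound⟩
  exact eq_of_kummerSteinOp_eq ha hc hf (fun y hy => (hsol y hy).1) hfb hbdd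
    (fun y hy => (hfeq y hy).trans (hsol y hy).2.symm) hx
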